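/- Let E, F be Banach spaces, let 1 ≤ s ≤ q < ∞ and 0 < t ≤ p < ∞, and let P : E → F be a continuous m-homogeneous polynomial that is absolutely (t,s)-summing with constant C ≥ 0. Then for every positive integer n and all x₁,…,xₙ ∈ E, one has (Σ_{j=1}^n ‖P(x_j)‖^p)^{1/p} ≤ C · n^{m/s − m/q} · ‖(x_j)_{j=1}^n‖_{w,q}^m. -/

import Mathlib

/-!
Hölder's inequality against the constant sequence `1`, applied to each functional in the unit
ball of `E*`, bounds the weak `ℓ^s`-norm by `n^(1/s - 1/q)` times the weak `ℓ^q`-norm. Since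
`ℓ^p`-norms decrease as `p` grows, the `ℓ^p`-sum of the `‖P(x_j)‖` is at most their `ℓ^t`-sum,
and the `(t,s)`-summing inequality connects the two estimates.
-/

open Finset

/-- The weak `q`-norm `‖(x_k)_{k=1}^n‖_{w,q} = sup_{φ ∈ B_{E*}} (∑ |φ(x_k)|^q)^{1/q}`. -/
noncomputable def weakNorm (𝕜 : Type*) [RCLike 𝕜] {E : Type*} [NormedAddCommGroup E]
    [NormedSpace 𝕜 E] {n : ℕ} (x : Fin n → E) (q : ℝ) : ℝ :=
  sSup {r : ℝ | ∃ φ : E →L[𝕜] 𝕜, ‖φ‖ ≤ 1 ∧ r = (∑ k, ‖φ (x k)‖ ^ q) ^ (1 / q)}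

namespace Real

variable {ι : Type*} (s : Finset ι) {f : ι → ℝ}

theorem sum_rpow_le_rpow_sum_of_nonneg (hf : ∀ i ∈ s, 0 ≤ f i) {r : ℝ} (hr : 1 ≤ r) :
    ∑ i ∈ s, f i ^ r ≤ (∑ i ∈ s, f i) ^ r := by
  classical
  induction s using Finset.induction_on with
  | empty => simp [zero_rpow (by linarith : r ≠ 0)]
  | insert a s ha ih =>
    have hfs : ∀ i ∈ s, 0 ≤ f i := fun i hi => hf i (mem_insert_of_mem hi)
    rw [sum_insert ha, sum_insert ha]
    calc f a ^ r + ∑ i ∈ s, f i ^ r ≤ f a ^ r + (∑ i ∈ s, f i) ^ r := by gcongr; exact ih hfs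
      _ ≤ (f a + ∑ i ∈ s, f i) ^ r :=
        add_rpow_le_rpow_add (hf a (mem_insert_self a s)) (sum_nonneg hfs) hr

theorem Lp_le_Lp_of_exponent_le (hf : ∀ i ∈ s, 0 ≤ f i) {p q : ℝ} (hp : 0 < p) (hpq : p ≤ q) :
    (∑ i ∈ s, f i ^ q) ^ (1 / q) ≤ (∑ i ∈ s, f i ^ p) ^ (1 / p) := by
  have hq : 0 < q := hp.trans_le hpq
  have hsum : ∑ i ∈ s, f i ^ q ≤ (∑ i ∈ s, f i ^ p) ^ (q / p) := by
    convert sum_rpow_le_rpow_sum_of_nonneg s (fun i hi => rpow_nonneg (hf i hi) p)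
      ((one_le_div hp).mpr hpq) using 2 with i hi
    rw [← rpow_mul (hf i hi), mul_div_cancel₀ q hp.ne']
  calc (∑ i ∈ s, f i ^ q) ^ (1 / q) ≤ ((∑ i ∈ s, f i ^ p) ^ (q / p)) ^ (1 / q) := by
        gcongr
        exact sum_nonneg fun i hi => rpow_nonneg (hf i hi) q
    _ = (∑ i ∈ s, f i ^ p) ^ (1 / p) := by
        rw [← rpow_mul (sum_nonneg fun i hi => rpow_nonneg (hf i hi) p)]
        field_simp

theorem Lp_le_card_rpow_mul_Lp (hf : ∀ i ∈ s, 0 ≤ f i) {p q : ℝ} (hp : 0 < p) (hpq : p ≤ q) :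
    (∑ i ∈ s, f i ^ p) ^ (1 / p) ≤ (#s : ℝ) ^ (1 / p - 1 / q) * (∑ i ∈ s, f i ^ q) ^ (1 / q) := by
  have hq : 0 < q := hp.trans_le hpq
  have hpow : (∑ i ∈ s, f i ^ p) ^ (q / p) ≤ (#s : ℝ) ^ (q / p - 1) * ∑ i ∈ s, f i ^ q := by
    convert rpow_sum_le_const_mul_sum_rpow_of_nonneg s ((one_le_div hp).mpr hpq)
      (fun i hi => rpow_nonneg (hf i hi) p) using 3 with i hi
    rw [← rpow_mul (hf i hi), mul_div_cancel₀ q hp.ne']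
  calc (∑ i ∈ s, f i ^ p) ^ (1 / p)
      = ((∑ i ∈ s, f i ^ p) ^ (q / p)) ^ (1 / q) := by
        rw [← rpow_mul (sum_nonneg fun i hi => rpow_nonneg (hf i hi) p)]
        field_simp
    _ ≤ ((#s : ℝ) ^ (q / p - 1) * ∑ i ∈ s, f i ^ q) ^ (1 / q) := by
        gcongr
        exact rpow_nonneg (sum_nonneg fun i hi => rpow_nonneg (hf i hi) p) _
    _ = (#s : ℝ) ^ (1 / p - 1 / q) * (∑ i ∈ s, f i ^ q) ^ (1 / q) := by
        rw [mul_rpow (by positivity) (sum_nonneg fun i hi => rpow_nonneg (hf i hi) q),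
          ← rpow_mul (by positivity)]
        congr 2
        field_simp

end Real

section WeakNorm

variable (𝕜 : Type*) [RCLike 𝕜] {E : Type*} [NormedAddCommGroup E] [NormedSpace 𝕜 E]
  {n : ℕ} (x : Fin n → E) {r : ℝ}

theorem bddAbove_weakNorm_set (hr : 0 < r) :
    BddAbove {u : ℝ | ∃ φ : E →L[𝕜] 𝕜, ‖φ‖ ≤ 1 ∧ u = (∑ k, ‖φ (x k)‖ ^ r) ^ (1 / r)} := by
  refine ⟨(∑ k, ‖x k‖ ^ r) ^ (1 / r), ?_⟩
  rintro u ⟨φ, hφ, rfl⟩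
  gcongr with k
  exact φ.le_of_opNorm_le hφ (x k) |>.trans_eq (one_mul _)

theorem le_weakNorm (hr : 0 < r) {φ : E →L[𝕜] 𝕜} (hφ : ‖φ‖ ≤ 1) :
    (∑ k, ‖φ (x k)‖ ^ r) ^ (1 / r) ≤ weakNorm 𝕜 x r :=
  le_csSup (bddAbove_weakNorm_set 𝕜 x hr) ⟨φ, hφ, rfl⟩

theorem weakNorm_nonneg (hr : 0 < r) : 0 ≤ weakNorm 𝕜 x r :=
  le_trans (by simp [Real.zero_rpow hr.ne', hr.ne']) (le_weakNorm 𝕜 x hr (φ := 0) (by simp))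

theorem weakNorm_le_rpow_mul_weakNorm {p q : ℝ} (hp : 0 < p) (hpq : p ≤ q) :
    weakNorm 𝕜 x p ≤ (n : ℝ) ^ (1 / p - 1 / q) * weakNorm 𝕜 x q := by
  refine csSup_le ⟨_, 0, by simp, rfl⟩ ?_
  rintro u ⟨φ, hφ, rfl⟩
  calc (∑ k, ‖φ (x k)‖ ^ p) ^ (1 / p)
      ≤ (n : ℝ) ^ (1 / p - 1 / q) * (∑ k, ‖φ (x k)‖ ^ q) ^ (1 / q) := by
        simpa using Real.Lp_le_card_rpow_mul_Lp univ (fun k _ => norm_nonneg (φ (x k))) hp hpq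
    _ ≤ (n : ℝ) ^ (1 / p - 1 / q) * weakNorm 𝕜 x q := by
        gcongr
        exact le_weakNorm 𝕜 x (hp.trans_le hpq) hφ

end WeakNorm

theorem stmt6_general {𝕜 : Type*} [RCLike 𝕜] {m : ℕ}
    {E : Type*} [NormedAddCommGroup E] [NormedSpace 𝕜 E]
    {F : Type*} [NormedAddCommGroup F] [NormedSpace 𝕜 F]
    {s q p t : ℝ} (hs : 1 ≤ s) (hsq : s ≤ q) (ht : 0 < t) (htp : t ≤ p)
    {C : ℝ} (hC : 0 ≤ C)
    (P : E → F)
    (hsum : ∀ (n : ℕ), 0 < n → ∀ x : Fin n → E,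
      (∑ k, ‖P (x k)‖ ^ t) ^ (1 / t) ≤ C * (weakNorm 𝕜 x s) ^ m) :
    ∀ (n : ℕ), 0 < n → ∀ x : Fin n → E,
      (∑ j, ‖P (x j)‖ ^ p) ^ (1 / p)
        ≤ C * (n : ℝ) ^ ((m : ℝ) / s - m / q) * (weakNorm 𝕜 x q) ^ m := by
  intro n hn x
  have hs₀ : 0 < s := zero_lt_one.trans_le hs
  calc (∑ j, ‖P (x j)‖ ^ p) ^ (1 / p)
      ≤ (∑ j, ‖P (x j)‖ ^ t) ^ (1 / t) :=
        Real.Lp_le_Lp_of_exponent_le univ (fun j _ => norm_nonneg _) ht htp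
    _ ≤ C * (weakNorm 𝕜 x s) ^ m := hsum n hn x
    _ ≤ C * ((n : ℝ) ^ (1 / s - 1 / q) * weakNorm 𝕜 x q) ^ m := by
        gcongr
        · exact weakNorm_nonneg 𝕜 x hs₀
        · exact weakNorm_le_rpow_mul_weakNorm 𝕜 x hs₀ hsq
    _ = C * (n : ℝ) ^ ((m : ℝ) / s - m / q) * (weakNorm 𝕜 x q) ^ m := by
        rw [mul_pow, ← Real.rpow_mul_natCast (by positivity), mul_assoc]
        congr 3
        ring

theorem stmt6 {𝕜 : Type*} [RCLike 𝕜] {m : ℕ} (hm : 1 ≤ m)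
    {E : Type*} [NormedAddCommGroup E] [NormedSpace 𝕜 E] [CompleteSpace E]
    {F : Type*} [NormedAddCommGroup F] [NormedSpace 𝕜 F] [CompleteSpace F]
    {s q p t : ℝ} (hs : 1 ≤ s) (hsq : s ≤ q) (ht : 0 < t) (htp : t ≤ p)
    {C : ℝ} (hC : 0 ≤ C)
    (P : E → F)
    (hP : ∃ T : ContinuousMultilinearMap 𝕜 (fun _ : Fin m => E) F,
      ∀ x : E, P x = T (fun _ => x))
    (hsum : ∀ (n : ℕ), 0 < n → ∀ x : Fin n → E,
      (∑ k, ‖P (x k)‖ ^ t) ^ (1 / t) ≤ C * (weakNorm 𝕜 x s) ^ m) :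
    ∀ (n : ℕ), 0 < n → ∀ x : Fin n → E,
      (∑ j, ‖P (x j)‖ ^ p) ^ (1 / p)
        ≤ C * (n : ℝ) ^ ((m : ℝ) / s - m / q) * (weakNorm 𝕜 x q) ^ m :=
  stmt6_general hs hsq ht htp hC P hsum
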